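/- Two ℂ-valued *-functors ω₁, ω₂ on a commutative full C*-category C are unitarily equivalent (i.e. related by a natural transformation with values in the unit circle 𝕋) if and only if ω₁ and ω₂ agree on each diagonal C*-algebra Hom_C(A,A), for all objects A. -/

import Mathlib

/-- The data and axioms of a (small) C*-category. -/
class CStarCat (Obj : Type*) (Hom : Obj → Obj → Type*)
    [∀ A B, NormedAddCommGroup (Hom A B)] [∀ A B, NormedSpace ℂ (Hom A B)]
    [∀ A B, CompleteSpace (Hom A B)] where
  comp : ∀ {A B C : Obj}, Hom B C → Hom A B → Hom A C
  id : ∀ A : Obj, Hom A A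
  star : ∀ {A B : Obj}, Hom A B → Hom B A
  comp_assoc : ∀ {A B C D : Obj} (f : Hom C D) (g : Hom B C) (h : Hom A B),
    comp (comp f g) h = comp f (comp g h)
  id_comp : ∀ {A B : Obj} (f : Hom A B), comp (id B) f = f
  comp_id : ∀ {A B : Obj} (f : Hom A B), comp f (id A) = f
  comp_add_left : ∀ {A B C : Obj} (f : Hom B C) (g h : Hom A B),
    comp f (g + h) = comp f g + comp f h
  comp_add_right : ∀ {A B C : Obj} (f g : Hom B C) (h : Hom A B),
    comp (f + g) h = comp f h + comp g h
  comp_smul_left : ∀ {A B C : Obj} (c : ℂ) (f : Hom B C) (g : Hom A B),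
    comp f (c • g) = c • comp f g
  comp_smul_right : ∀ {A B C : Obj} (c : ℂ) (f : Hom B C) (g : Hom A B),
    comp (c • f) g = c • comp f g
  norm_comp_le : ∀ {A B C : Obj} (f : Hom B C) (g : Hom A B), ‖comp f g‖ ≤ ‖f‖ * ‖g‖
  star_star : ∀ {A B : Obj} (f : Hom A B), star (star f) = f
  star_add : ∀ {A B : Obj} (f g : Hom A B), star (f + g) = star f + star g
  star_smul : ∀ {A B : Obj} (c : ℂ) (f : Hom A B),
    star (c • f) = (starRingEnd ℂ c) • star f
  star_comp : ∀ {A B C : Obj} (f : Hom B C) (g : Hom A B),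
    star (comp f g) = comp (star g) (star f)
  norm_star_comp_self : ∀ {A B : Obj} (f : Hom A B), ‖comp (star f) f‖ = ‖f‖ ^ 2
  star_comp_self_positive : ∀ {A B : Obj} (f : Hom A B),
    ∃ g : Hom A A, comp (star f) f = comp (star g) g

variable (Obj : Type*) (Hom : Obj → Obj → Type*)
  [∀ A B, NormedAddCommGroup (Hom A B)] [∀ A B, NormedSpace ℂ (Hom A B)]
  [∀ A B, CompleteSpace (Hom A B)] [C : CStarCat Obj Hom]

/-- A `ℂ`-valued *-functor on a C*-category: linear on each hom-space, multiplicative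
under composition, respecting the involution, and sending identities to `1`. -/
structure IsStarFunctor (ω : ∀ A B : Obj, Hom A B → ℂ) : Prop where
  map_add : ∀ (A B : Obj) (f g : Hom A B), ω A B (f + g) = ω A B f + ω A B g
  map_smul : ∀ (A B : Obj) (c : ℂ) (f : Hom A B), ω A B (c • f) = c * ω A B f
  map_comp : ∀ (A B C' : Obj) (f : Hom B C') (g : Hom A B),
    ω A C' (CStarCat.comp f g) = ω B C' f * ω A B g
  map_star : ∀ (A B : Obj) (f : Hom A B),
    ω B A (CStarCat.star f) = (starRingEnd ℂ) (ω A B f)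
  map_id : ∀ A : Obj, ω A A (CStarCat.id (Hom := Hom) A) = 1

/-!
A character `φ` of `Hom A A` satisfies `‖φ a‖ ≤ ‖a‖`, so `ω A A` is continuous. If `ω A B`
vanished, `ω A A` would vanish on every `x⋆ ∘ y` with `x y : Hom A B`, hence on a dense subspace
of `Hom A A` by fullness, contradicting `ω A A (id A) = 1`. Agreement on `Hom A A` says that the
rank-one forms `(x, y) ↦ conj (ωᵢ x) * ωᵢ y` on `Hom A B` coincide, which forces
`ω₂ = μ A B • ω₁` on `Hom A B` with `‖μ A B‖ = 1`. Functoriality makes `μ` a cocycle,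
`μ A D = μ B D * μ A B`, and `ν := μ A₀` trivialises it.
-/

namespace CStarCat

variable {Obj Hom}

def compLeft {A B D : Obj} (f : Hom B D) : Hom A B →L[ℂ] Hom A D :=
  LinearMap.mkContinuous
    { toFun := comp f
      map_add' := comp_add_left f
      map_smul' := fun c g => comp_smul_left c f g }
    ‖f‖ (norm_comp_le f)

@[simp]
theorem compLeft_apply {A B D : Obj} (f : Hom B D) (g : Hom A B) : compLeft f g = comp f g :=
  rfl

theorem norm_compLeft_le {A B D : Obj} (f : Hom B D) :
    ‖(compLeft f : Hom A B →L[ℂ] Hom A D)‖ ≤ ‖f‖ :=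
  LinearMap.mkContinuous_norm_le _ (norm_nonneg f) _

/-- If `‖a‖ < |φ a|`, then `t = (φ a)⁻¹ • (a ∘ -)` has norm `< 1`, so `1 - t` is invertible and
some `s` solves `s - t s = a`; applying `φ` gives `0 = φ a`. -/
theorem norm_apply_le_of_map_comp {A : Obj} (φ : Hom A A →ₗ[ℂ] ℂ)
    (hφ : ∀ f g, φ (comp f g) = φ f * φ g) (a : Hom A A) : ‖φ a‖ ≤ ‖a‖ := by
  by_contra! ha
  have hφa : φ a ≠ 0 := norm_pos_iff.mp ((norm_nonneg a).trans_lt ha)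
  set t : Hom A A →L[ℂ] Hom A A := (φ a)⁻¹ • compLeft a
  have ht : ‖t‖ < 1 := calc
    ‖t‖ ≤ ‖φ a‖⁻¹ * ‖a‖ := by
      rw [norm_smul, norm_inv]; gcongr; exact norm_compLeft_le a
    _ < 1 := by rwa [inv_mul_lt_one₀ (norm_pos_iff.mpr hφa)]
  set s := (∑' n : ℕ, t ^ n) a
  have hs : s - t s = a := by
    simpa using congr($(mul_neg_geom_series t ht) a)
  have : φ s - φ s = φ a := by
    simpa [t, hφ, inv_mul_cancel_left₀ hφa] using congr(φ $hs)
  exact hφa (by simpa using this.symm)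

end CStarCat

namespace IsStarFunctor

variable {Obj Hom} {ω : ∀ A B : Obj, Hom A B → ℂ}

def toLinearMap (h : IsStarFunctor Obj Hom ω) (A B : Obj) : Hom A B →ₗ[ℂ] ℂ where
  toFun := ω A B
  map_add' := h.map_add A B
  map_smul' := h.map_smul A B

@[simp]
theorem toLinearMap_apply (h : IsStarFunctor Obj Hom ω) {A B : Obj} (x : Hom A B) :
    h.toLinearMap A B x = ω A B x :=
  rfl

theorem map_star_comp (h : IsStarFunctor Obj Hom ω) {A B : Obj} (x y : Hom A B) :
    ω A A (CStarCat.comp (CStarCat.star x) y) = starRingEnd ℂ (ω A B x) * ω A B y := by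
  rw [h.map_comp, h.map_star]

theorem norm_apply_le (h : IsStarFunctor Obj Hom ω) {A : Obj} (a : Hom A A) :
    ‖ω A A a‖ ≤ ‖a‖ :=
  CStarCat.norm_apply_le_of_map_comp (h.toLinearMap A A) (h.map_comp A A A) a

theorem continuous_apply_diag (h : IsStarFunctor Obj Hom ω) (A : Obj) : Continuous (ω A A) :=
  AddMonoidHomClass.continuous_of_bound (h.toLinearMap A A) 1 fun a => by
    simpa using h.norm_apply_le a

theorem exists_ne_zero (h : IsStarFunctor Obj Hom ω) {A B : Obj}
    (hfull : closure (↑(Submodule.span ℂ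
      (Set.range fun p : Hom A B × Hom A B =>
        CStarCat.comp (CStarCat.star p.1) p.2)) : Set (Hom A A)) = Set.univ) :
    ∃ x : Hom A B, ω A B x ≠ 0 := by
  by_contra! hzero
  have hspan : Submodule.span ℂ (Set.range fun p : Hom A B × Hom A B =>
      CStarCat.comp (CStarCat.star p.1) p.2) ≤ LinearMap.ker (h.toLinearMap A A) := by
    rw [Submodule.span_le]
    rintro _ ⟨⟨x, y⟩, rfl⟩
    simp [h.map_star_comp, hzero]
  have hker : IsClosed (LinearMap.ker (h.toLinearMap A A) : Set (Hom A A)) :=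
    isClosed_singleton.preimage (h.continuous_apply_diag A)
  have hid := closure_minimal hspan hker (hfull ▸ Set.mem_univ (CStarCat.id A))
  simp [h.map_id] at hid

end IsStarFunctor

theorem exists_norm_eq_one_eq_mul_of_conj_mul_eq {α : Type*} (a b : α → ℂ)
    (h : ∀ x y, starRingEnd ℂ (a x) * a y = starRingEnd ℂ (b x) * b y) (hne : ∃ x, a x ≠ 0) :
    ∃ μ : ℂ, ‖μ‖ = 1 ∧ ∀ y, b y = μ * a y := by
  obtain ⟨x₀, hx₀⟩ := hne
  have hnorm : ‖a x₀‖ = ‖b x₀‖ := by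
    have hsq := h x₀ x₀
    rw [Complex.conj_mul', Complex.conj_mul'] at hsq
    exact (pow_left_inj₀ (norm_nonneg _) (norm_nonneg _) two_ne_zero).mp (mod_cast hsq)
  have hb : b x₀ ≠ 0 := norm_ne_zero_iff.mp (hnorm ▸ norm_ne_zero_iff.mpr hx₀)
  refine ⟨b x₀ / a x₀, by rw [norm_div, hnorm, div_self (norm_ne_zero_iff.mpr hb)], fun y => ?_⟩
  apply mul_left_cancel₀ ((map_ne_zero (starRingEnd ℂ)).mpr hb)
  field_simp
  linear_combination a x₀ * (h x₀ y).symm + a y * h x₀ x₀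

namespace IsStarFunctor

variable {Obj Hom} {ω₁ ω₂ : ∀ A B : Obj, Hom A B → ℂ}

theorem factor_cocycle (h₁ : IsStarFunctor Obj Hom ω₁) (h₂ : IsStarFunctor Obj Hom ω₂)
    (hne : ∀ A B, ∃ x : Hom A B, ω₁ A B x ≠ 0) {μ : Obj → Obj → ℂ}
    (hω : ∀ A B (x : Hom A B), ω₂ A B x = μ A B * ω₁ A B x) (A B D : Obj) :
    μ A D = μ B D * μ A B := by
  obtain ⟨f, hf⟩ := hne B D
  obtain ⟨g, hg⟩ := hne A B
  have hfg := hω A D (CStarCat.comp f g)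
  rw [h₁.map_comp, h₂.map_comp, hω B D f, hω A B g] at hfg
  exact mul_right_cancel₀ (mul_ne_zero hf hg) (by linear_combination -hfg)

theorem exists_gauge_of_eq_mul (h₁ : IsStarFunctor Obj Hom ω₁)
    (h₂ : IsStarFunctor Obj Hom ω₂) (hne : ∀ A B, ∃ x : Hom A B, ω₁ A B x ≠ 0)
    {μ : Obj → Obj → ℂ} (hμ : ∀ A B, ‖μ A B‖ = 1)
    (hω : ∀ A B (x : Hom A B), ω₂ A B x = μ A B * ω₁ A B x) :
    ∃ ν : Obj → ℂ, (∀ A, ‖ν A‖ = 1) ∧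
      ∀ A B (x : Hom A B), ω₂ A B x = ν B * ω₁ A B x * (ν A)⁻¹ := by
  rcases isEmpty_or_nonempty Obj with _ | ⟨⟨A₀⟩⟩
  · exact ⟨fun _ => 1, isEmptyElim, isEmptyElim⟩
  refine ⟨μ A₀, hμ A₀, fun A B x => ?_⟩
  have hA : μ A₀ A ≠ 0 := norm_ne_zero_iff.mp (by simp [hμ])
  rw [hω, h₁.factor_cocycle h₂ hne hω A₀ A B]
  field_simp

end IsStarFunctor

theorem starFunctors_unitarily_equivalent_iff_agree_on_diagonals
    (hfull : ∀ A B : Obj, closure (↑(Submodule.span ℂ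
      (Set.range fun p : Hom A B × Hom A B =>
        CStarCat.comp (CStarCat.star p.1) p.2)) : Set (Hom A A)) = Set.univ)
    (ω₁ ω₂ : ∀ A B : Obj, Hom A B → ℂ)
    (h₁ : IsStarFunctor Obj Hom ω₁) (h₂ : IsStarFunctor Obj Hom ω₂) :
    (∃ ν : Obj → ℂ, (∀ A : Obj, ‖ν A‖ = 1) ∧
      ∀ (A B : Obj) (x : Hom A B), ω₂ A B x = ν B * ω₁ A B x * (ν A)⁻¹) ↔
    (∀ (A : Obj) (x : Hom A A), ω₁ A A x = ω₂ A A x) := by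
  constructor
  · rintro ⟨ν, hν, hω⟩ A x
    have hνA : ν A ≠ 0 := norm_ne_zero_iff.mp (by simp [hν])
    rw [hω, mul_comm (ν A), mul_inv_cancel_right₀ hνA]
  · intro hdiag
    have hne A B := h₁.exists_ne_zero (hfull A B)
    have hsesq A B (x y : Hom A B) :
        starRingEnd ℂ (ω₁ A B x) * ω₁ A B y = starRingEnd ℂ (ω₂ A B x) * ω₂ A B y := by
      rw [← h₁.map_star_comp, ← h₂.map_star_comp, hdiag]
    choose μ hμ hω using fun A B =>
      exists_norm_eq_one_eq_mul_of_conj_mul_eq (ω₁ A B) (ω₂ A B) (hsesq A B) (hne A B)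
    exact h₁.exists_gauge_of_eq_mul h₂ hne hμ hω
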